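/- arXiv:1909.03863 — 4 statements merged into one kernel-verified Lean document; each statement's English description precedes it below -/
import Mathlib

section
/- Let α be a quadratic irrational with purely periodic continued fraction expansion α = [0; b_1, …, b_s, b_1, …, b_s, …] of period s, and let (p_n/q_n) be its convergents. Then the denominators satisfy the recurrence q_{n+2s} = t · q_{n+s} − (−1)^s · q_n for all n ≥ 1, where t = p_{s−1} + q_s. -/
/-- The Lenstra–Shallit recurrence for the convergent denominators of a purely
periodic continued fraction `α = [0; b₁, …, b_s, b₁, …, b_s, …]`. -/
theorem lenstra_shallit_recurrence (s : ℕ) (hs : 1 ≤ s) (a : ℕ → ℕ)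
    (ha0 : a 0 = 0) (ha : ∀ i, 1 ≤ i → 1 ≤ a i)
    (hper : ∀ i, 1 ≤ i → a (i + s) = a i)
    (p q : ℕ → ℤ)
    (hp0 : p 0 = 0) (hp1 : p 1 = 1)
    (hq0 : q 0 = 1) (hq1 : q 1 = (a 1 : ℤ))
    (hp : ∀ m, 2 ≤ m → p m = (a m : ℤ) * p (m - 1) + p (m - 2))
    (hq : ∀ m, 2 ≤ m → q m = (a m : ℤ) * q (m - 1) + q (m - 2)) :
    ∀ m, 1 ≤ m → q (m + 2 * s) = (p (s - 1) + q s) * q (m + s) - (-1) ^ s * q m := by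
  -- determinant identity
  have hdet : ∀ n, 1 ≤ n → q n * p (n - 1) - q (n - 1) * p n = (-1) ^ n := by
    intro n hn
    induction n, hn using Nat.le_induction with
    | base => simp [hp0, hp1, hq0, hq1]
    | succ n hn ih =>
      have h1 := hq (n + 1) (by omega)
      have h2 := hp (n + 1) (by omega)
      have e1 : n + 1 - 1 = n := by omega
      have e2 : n + 1 - 2 = n - 1 := by omega
      rw [e1, e2] at h1 h2
      rw [e1, h1, h2, pow_succ]
      linear_combination (-1 : ℤ) * ih
  -- shift identity (two consecutive indices simultaneously)
  have hshift : ∀ m, 1 ≤ m →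
      (q (m + s) = q s * q m + q (s - 1) * p m ∧
       p (m + s) = p s * q m + p (s - 1) * p m) ∧
      (q (m + 1 + s) = q s * q (m + 1) + q (s - 1) * p (m + 1) ∧
       p (m + 1 + s) = p s * q (m + 1) + p (s - 1) * p (m + 1)) := by
    intro m hm
    induction m, hm using Nat.le_induction with
    | base =>
      have e1 : 1 + s - 1 = s := by omega
      have e2 : 1 + s - 2 = s - 1 := by omega
      have hq1s := hq (1 + s) (by omega)
      have hp1s := hp (1 + s) (by omega)
      rw [e1, e2] at hq1s hp1s
      have hper1 : a (1 + s) = a 1 := hper 1 le_rfl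
      rw [hper1] at hq1s hp1s
      have hQ1 : q (1 + s) = q s * q 1 + q (s - 1) * p 1 := by
        rw [hq1s, hq1, hp1]; ring
      have hP1 : p (1 + s) = p s * q 1 + p (s - 1) * p 1 := by
        rw [hp1s, hq1, hp1]; ring
      have e3 : 2 + s - 1 = 1 + s := by omega
      have e4 : 2 + s - 2 = s := by omega
      have hper2 : a (2 + s) = a 2 := hper 2 (by omega)
      have h2 := hq 2 (by omega)
      have h2p := hp 2 (by omega)
      norm_num at h2 h2p
      refine ⟨⟨hQ1, hP1⟩, ?_, ?_⟩
      · show q (2 + s) = q s * q 2 + q (s - 1) * p 2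
        have h := hq (2 + s) (by omega)
        rw [e3, e4] at h
        rw [h, hper2, hQ1, h2, h2p, hq0, hq1, hp0, hp1]
        ring
      · show p (2 + s) = p s * q 2 + p (s - 1) * p 2
        have h := hp (2 + s) (by omega)
        rw [e3, e4] at h
        rw [h, hper2, hP1, h2, h2p, hq0, hq1, hp0, hp1]
        ring
    | succ m hm ih =>
      obtain ⟨⟨hQ0, hP0⟩, hQ1, hP1⟩ := ih
      refine ⟨⟨hQ1, hP1⟩, ?_, ?_⟩
      · have h := hq (m + 1 + 1 + s) (by omega)
        have e3 : m + 1 + 1 + s - 1 = m + 1 + s := by omega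
        have e4 : m + 1 + 1 + s - 2 = m + s := by omega
        rw [e3, e4] at h
        have hperm : a (m + 1 + 1 + s) = a (m + 2) := by
          have := hper (m + 2) (by omega)
          rw [show m + 2 + s = m + 1 + 1 + s by omega] at this
          exact this
        have hm2 := hq (m + 2) (by omega)
        have e5 : m + 2 - 1 = m + 1 := by omega
        have e6 : m + 2 - 2 = m := by omega
        rw [e5, e6] at hm2
        have hm2p := hp (m + 2) (by omega)
        rw [e5, e6] at hm2p
        rw [h, hperm, hQ1, hQ0, show m + 1 + 1 = m + 2 by omega, hm2, hm2p]
        ring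
      · have h := hp (m + 1 + 1 + s) (by omega)
        have e3 : m + 1 + 1 + s - 1 = m + 1 + s := by omega
        have e4 : m + 1 + 1 + s - 2 = m + s := by omega
        rw [e3, e4] at h
        have hperm : a (m + 1 + 1 + s) = a (m + 2) := by
          have := hper (m + 2) (by omega)
          rw [show m + 2 + s = m + 1 + 1 + s by omega] at this
          exact this
        have hm2 := hq (m + 2) (by omega)
        have e5 : m + 2 - 1 = m + 1 := by omega
        have e6 : m + 2 - 2 = m := by omega
        rw [e5, e6] at hm2
        have hm2p := hp (m + 2) (by omega)
        rw [e5, e6] at hm2p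
        rw [h, hperm, hP1, hP0, show m + 1 + 1 = m + 2 by omega, hm2, hm2p]
        ring
  intro m hm
  have h1 := (hshift m hm).1.1
  have h1p := (hshift m hm).1.2
  have h2 := (hshift (m + s) (by omega)).1.1
  have hd := hdet s hs
  rw [show m + 2 * s = m + s + s by omega, h2, h1p, h1]
  linear_combination (- q m) * hd
end

section
/- Let γ = (1+√5)/2 and γ̄ = (1−√5)/2. For any positive integers m_1 < m_2 < ⋯ < m_k with consecutive differences at least 2, setting N = F_{m_1} + ⋯ + F_{m_k}, the quantity Λ := |N · √5 · γ^{−m_1} · (1 + γ^{m_2 − m_1} + ⋯ + γ^{m_k − m_1})^{−1} − 1| satisfies 0 < Λ < γ^{1 − m_k}. -/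
open Real goldenRatio

private lemma sum_pow_le_aux (x : ℝ) (hx0 : 0 ≤ x) (hx2 : x ^ 2 < 1) :
    ∀ (n : ℕ) (m : ℕ → ℕ) (j : ℕ), (∀ i, j ≤ i → i < j + n → m i + 2 ≤ m (i + 1)) →
      ∑ i ∈ Finset.Icc j (j + n), x ^ m i ≤ x ^ m j / (1 - x ^ 2) := by
  intro n
  induction n with
  | zero =>
      intro m j _
      simp only [Nat.add_zero, Finset.Icc_self, Finset.sum_singleton]
      have h1 : 0 < 1 - x ^ 2 := by linarith
      rw [le_div_iff₀ h1]
      nlinarith [pow_nonneg hx0 (m j), sq_nonneg x]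
  | succ n ih =>
      intro m j hgap
      have hx1 : x ≤ 1 := by nlinarith
      have h1 : 0 < 1 - x ^ 2 := by linarith
      have hins : Finset.Icc j (j + (n + 1)) = insert j (Finset.Icc (j + 1) (j + 1 + n)) := by
        rw [show j + 1 + n = j + (n + 1) by omega, Finset.Icc_add_one_left_eq_Ioc,
          Finset.Ioc_insert_left (by omega)]
      rw [hins, Finset.sum_insert (by simp)]
      have h2 := ih m (j + 1) (fun i hi hi' => hgap i (by omega) (by omega))
      have h3 : x ^ m (j + 1) ≤ x ^ (m j + 2) :=
        pow_le_pow_of_le_one hx0 hx1 (hgap j le_rfl (by omega))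
      have h4 : x ^ m (j + 1) / (1 - x ^ 2) ≤ x ^ (m j + 2) / (1 - x ^ 2) := by
        gcongr
      have key : x ^ m j + x ^ (m j + 2) / (1 - x ^ 2) = x ^ m j / (1 - x ^ 2) := by
        field_simp
        rw [pow_add]
        ring
      linarith

set_option maxHeartbeats 1000000 in
theorem lambda_zeckendorf_bound (γ : ℝ) (hγ : γ = (1 + Real.sqrt 5) / 2)
    (k : ℕ) (hk : 1 ≤ k) (m : ℕ → ℕ) (hm1 : 1 ≤ m 1)
    (hgap : ∀ i, 1 ≤ i → i < k → m i + 2 ≤ m (i + 1))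
    (N : ℕ) (hN : N = ∑ i ∈ Finset.Icc 1 k, Nat.fib (m i)) :
    0 < |(N : ℝ) * Real.sqrt 5 * γ ^ (-(m 1 : ℤ)) *
          (1 + ∑ i ∈ Finset.Icc 2 k, γ ^ (m i - m 1))⁻¹ - 1| ∧
    |(N : ℝ) * Real.sqrt 5 * γ ^ (-(m 1 : ℤ)) *
          (1 + ∑ i ∈ Finset.Icc 2 k, γ ^ (m i - m 1))⁻¹ - 1| < γ ^ (1 - (m k : ℤ)) := by
  have hγφ : γ = φ := hγ
  subst hγφ
  -- basic facts
  have hφ1 : 1 < φ := one_lt_goldenRatio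
  have hφ0 : (0:ℝ) < φ := goldenRatio_pos
  have hψneg : ψ < 0 := goldenConj_neg
  set x : ℝ := -ψ with hxdef
  have hx0 : 0 < x := by simp [hxdef]; linarith
  have hxabs : |ψ| = x := abs_of_neg hψneg
  have hx2x : 1 - x ^ 2 = x := by
    have := goldenConj_sq
    simp only [hxdef]
    nlinarith
  have hx1 : x < 1 := by nlinarith
  have hx2 : x ^ 2 < 1 := by nlinarith
  have hφx : φ * x = 1 := by
    have := goldenRatio_mul_goldenConj
    simp only [hxdef]; nlinarith
  -- monotonicity
  have hmono : ∀ a b, 1 ≤ a → a ≤ b → b ≤ k → m a + 2 * (b - a) ≤ m b := by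
    intro a b ha hab hbk
    induction b, hab using Nat.le_induction with
    | base => omega
    | succ b hb ih =>
        have h1 := hgap b (by omega) (by omega)
        have h2 := ih (by omega)
        omega
  -- split Icc 1 k
  have hins1 : Finset.Icc 1 k = insert 1 (Finset.Icc 2 k) := by
    ext i
    simp only [Finset.mem_Icc, Finset.mem_insert]
    omega
  set A : ℝ := ∑ i ∈ Finset.Icc 1 k, φ ^ m i with hA
  set B : ℝ := ∑ i ∈ Finset.Icc 1 k, ψ ^ m i with hB
  have h5ne : Real.sqrt 5 ≠ 0 := by positivity
  have hNAB : (N : ℝ) * Real.sqrt 5 = A - B := by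
    rw [hN, hA, hB, ← Finset.sum_sub_distrib]
    push_cast
    rw [Finset.sum_mul]
    refine Finset.sum_congr rfl fun i _ => ?_
    rw [Real.coe_fib_eq]
    field_simp
  set T : ℝ := 1 + ∑ i ∈ Finset.Icc 2 k, φ ^ (m i - m 1) with hTdef
  have hφm1 : (0:ℝ) < φ ^ m 1 := pow_pos hφ0 _
  have hT : φ ^ m 1 * T = A := by
    rw [hTdef, hA, hins1, Finset.sum_insert (by simp), mul_add, mul_one, Finset.mul_sum]
    congr 1
    refine Finset.sum_congr rfl fun i hi => ?_
    have hi' := Finset.mem_Icc.mp hi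
    have hle : m 1 ≤ m i := by have := hmono 1 i (by omega) (by omega) (by omega); omega
    rw [← pow_add, Nat.add_sub_cancel' hle]
  have hTpos : 0 < T := by
    have : 0 ≤ ∑ i ∈ Finset.Icc 2 k, φ ^ (m i - m 1) :=
      Finset.sum_nonneg fun i _ => pow_nonneg (le_of_lt hφ0) _
    rw [hTdef]; linarith
  have hApos : 0 < A := by rw [← hT]; positivity
  have hAk : φ ^ m k ≤ A := by
    rw [hA]
    exact Finset.single_le_sum (fun i _ => le_of_lt (pow_pos hφ0 _))
      (Finset.mem_Icc.mpr ⟨hk, le_rfl⟩)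
  -- the expression equals -B/A
  have hE : (N : ℝ) * Real.sqrt 5 * φ ^ (-(m 1 : ℤ)) * T⁻¹ - 1 = -B / A := by
    rw [hNAB, zpow_neg, zpow_natCast, ← hT]
    field_simp
    ring
  rw [hE]
  -- sum bounds
  have habs : ∀ (s : Finset ℕ), |∑ i ∈ s, ψ ^ m i| ≤ ∑ i ∈ s, x ^ m i := by
    intro s
    calc |∑ i ∈ s, ψ ^ m i| ≤ ∑ i ∈ s, |ψ ^ m i| := Finset.abs_sum_le_sum_abs _ _
    _ = ∑ i ∈ s, x ^ m i := by
        refine Finset.sum_congr rfl fun i _ => ?_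
        rw [abs_pow, hxabs]
  have hsum1 : ∑ i ∈ Finset.Icc 1 k, x ^ m i ≤ x ^ m 1 / (1 - x ^ 2) := by
    have := sum_pow_le_aux x (le_of_lt hx0) hx2 (k - 1) m 1
      (fun i hi hi' => hgap i hi (by omega))
    rwa [show 1 + (k - 1) = k by omega] at this
  have hB1 : |B| ≤ 1 := by
    have h1 : x ^ m 1 / (1 - x ^ 2) = x ^ (m 1 - 1) := by
      rw [hx2x, eq_comm, eq_div_iff (ne_of_gt hx0), ← pow_succ]
      congr 1; omega
    have h2 : x ^ (m 1 - 1) ≤ 1 := pow_le_one₀ (le_of_lt hx0) (le_of_lt hx1)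
    calc |B| ≤ ∑ i ∈ Finset.Icc 1 k, x ^ m i := habs _
    _ ≤ x ^ m 1 / (1 - x ^ 2) := hsum1
    _ = x ^ (m 1 - 1) := h1
    _ ≤ 1 := h2
  -- B ≠ 0
  have hBne : B ≠ 0 := by
    rcases eq_or_lt_of_le hk with hk1 | hk2
    · rw [hB, ← hk1, Finset.Icc_self, Finset.sum_singleton]
      exact pow_ne_zero _ goldenConj_ne_zero
    · -- k ≥ 2
      have hsum2 : |∑ i ∈ Finset.Icc 2 k, ψ ^ m i| < x ^ m 1 := by
        have haux := sum_pow_le_aux x (le_of_lt hx0) hx2 (k - 2) m 2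
          (fun i hi hi' => hgap i (by omega) (by omega))
        rw [show 2 + (k - 2) = k by omega] at haux
        have hm2 : m 1 + 2 ≤ m 2 := hgap 1 le_rfl hk2
        have h1 : x ^ m 2 / (1 - x ^ 2) = x ^ (m 2 - 1) := by
          rw [hx2x, eq_comm, eq_div_iff (ne_of_gt hx0), ← pow_succ]
          congr 1; omega
        have h2 : x ^ (m 2 - 1) ≤ x ^ (m 1 + 1) :=
          pow_le_pow_of_le_one (le_of_lt hx0) (le_of_lt hx1) (by omega)
        have h3 : x ^ (m 1 + 1) < x ^ m 1 := by
          rw [pow_succ]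
          exact mul_lt_of_lt_one_right (pow_pos hx0 (m 1)) hx1
        calc |∑ i ∈ Finset.Icc 2 k, ψ ^ m i| ≤ ∑ i ∈ Finset.Icc 2 k, x ^ m i := habs _
        _ ≤ x ^ m 2 / (1 - x ^ 2) := haux
        _ = x ^ (m 2 - 1) := h1
        _ ≤ x ^ (m 1 + 1) := h2
        _ < x ^ m 1 := h3
      intro h0
      have hBsplit : B = ψ ^ m 1 + ∑ i ∈ Finset.Icc 2 k, ψ ^ m i := by
        rw [hB, hins1, Finset.sum_insert (by simp)]
      have : |ψ ^ m 1| = |∑ i ∈ Finset.Icc 2 k, ψ ^ m i| := by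
        rw [hBsplit] at h0
        have : ψ ^ m 1 = -∑ i ∈ Finset.Icc 2 k, ψ ^ m i := by linarith
        rw [this, abs_neg]
      rw [abs_pow, hxabs] at this
      linarith [hsum2, this]
  constructor
  · have : -B / A ≠ 0 := by
      apply div_ne_zero _ (ne_of_gt hApos)
      simpa using hBne
    exact abs_pos.mpr this
  · have hrw : φ ^ (1 - (m k : ℤ)) = φ / φ ^ m k := by
      rw [zpow_sub₀ (ne_of_gt hφ0), zpow_one, zpow_natCast]
    rw [hrw, abs_div, abs_neg, abs_of_pos hApos, div_lt_div_iff₀ hApos (pow_pos hφ0 _)]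
    have hpk : (0:ℝ) < φ ^ m k := pow_pos hφ0 _
    nlinarith [hB1, hAk, abs_nonneg B]
end

section
/- Every positive integer N has a unique representation N = d_ℓ q_ℓ + ⋯ + d_1 q_1 + d_0 q_0 in the Ostrowski α-numeration system, i.e., with 0 ≤ d_0 < a_1, 0 ≤ d_i ≤ a_{i+1} for i ≥ 1, and d_{i−1} = 0 whenever d_i = a_{i+1} (i ≥ 1). -/
section OstrowskiAux

variable {a q : ℕ → ℕ}

private lemma ost_rec (hq : ∀ m, 2 ≤ m → q m = a m * q (m - 1) + q (m - 2)) :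
    ∀ m, q (m + 2) = a (m + 2) * q (m + 1) + q m :=
  fun m => hq (m + 2) (by omega)

private lemma ost_qpos (ha : ∀ i, 1 ≤ i → 1 ≤ a i) (hq0 : q 0 = 1) (hq1 : q 1 = a 1)
    (hq : ∀ m, 2 ≤ m → q m = a m * q (m - 1) + q (m - 2)) : ∀ n, 0 < q n := by
  intro n
  induction n using Nat.strong_induction_on with
  | _ n ih =>
    match n with
    | 0 => show 0 < q 0; omega
    | 1 => show 0 < q 1; have := ha 1 le_rfl; omega
    | (m+2) =>
      have h := ost_rec hq m
      have := ih m (by omega)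
      omega

private lemma ost_qmono (ha : ∀ i, 1 ≤ i → 1 ≤ a i) (hq0 : q 0 = 1) (hq1 : q 1 = a 1)
    (hq : ∀ m, 2 ≤ m → q m = a m * q (m - 1) + q (m - 2)) : ∀ n, q n ≤ q (n + 1) := by
  intro n
  match n with
  | 0 => show q 0 ≤ q 1; have := ha 1 le_rfl; omega
  | (m+1) =>
    have h := ost_rec hq m
    have h1 := ha (m + 2) (by omega)
    have h2 := ost_qpos ha hq0 hq1 hq (m + 1)
    nlinarith

private lemma ost_qgrow (ha : ∀ i, 1 ≤ i → 1 ≤ a i) (hq0 : q 0 = 1) (hq1 : q 1 = a 1)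
    (hq : ∀ m, 2 ≤ m → q m = a m * q (m - 1) + q (m - 2)) : ∀ n, n ≤ q n := by
  intro n
  induction n with
  | zero => omega
  | succ m ih =>
    match m with
    | 0 => show 1 ≤ q 1; have := ha 1 le_rfl; omega
    | (k+1) =>
      have h := ost_rec hq k
      have h1 := ha (k + 2) (by omega)
      have h2 := ost_qpos ha hq0 hq1 hq (k + 1)
      have h3 := ost_qpos ha hq0 hq1 hq k
      nlinarith

/-- The key bound: any valid digit string sums below `q n`. -/
private lemma ost_bound (ha : ∀ i, 1 ≤ i → 1 ≤ a i) (hq0 : q 0 = 1) (hq1 : q 1 = a 1)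
    (hq : ∀ m, 2 ≤ m → q m = a m * q (m - 1) + q (m - 2))
    (d : ℕ → ℕ) (hd0 : d 0 < a 1) (hd1 : ∀ i, 1 ≤ i → d i ≤ a (i + 1))
    (hd2 : ∀ i, 1 ≤ i → d i = a (i + 1) → d (i - 1) = 0) :
    ∀ n, ∑ i ∈ Finset.range n, d i * q i < q n := by
  intro n
  induction n using Nat.strong_induction_on with
  | _ n ih =>
    match n with
    | 0 => simpa [hq0] using Nat.zero_lt_one
    | 1 => simpa [hq0, hq1] using hd0
    | (m+2) =>
      rw [Finset.sum_range_succ, ost_rec hq m]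
      rcases eq_or_lt_of_le (hd1 (m + 1) (by omega)) with h | h
      · -- d (m+1) = a (m+2), so d m = 0
        have hdm : d m = 0 := hd2 (m + 1) (by omega) h
        have hs : ∑ i ∈ Finset.range (m + 1), d i * q i
            = ∑ i ∈ Finset.range m, d i * q i := by
          rw [Finset.sum_range_succ, hdm]; ring
        have hb := ih m (by omega)
        have hx : a (m + 1 + 1) = a (m + 2) := rfl
        rw [hx] at h
        rw [hs, h]
        omega
      · have hb := ih (m + 1) (by omega)
        have hx : a (m + 1 + 1) = a (m + 2) := rfl
        have hmul : (d (m + 1) + 1) * q (m + 1) ≤ a (m + 2) * q (m + 1) :=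
          Nat.mul_le_mul_right _ (by omega)
        have hexp : (d (m + 1) + 1) * q (m + 1) = d (m + 1) * q (m + 1) + q (m + 1) := by
          ring
        omega

/-- Greedy existence: every `N < q n` has a valid representation supported below `n`. -/
private lemma ost_exists (ha : ∀ i, 1 ≤ i → 1 ≤ a i) (hq0 : q 0 = 1) (hq1 : q 1 = a 1)
    (hq : ∀ m, 2 ≤ m → q m = a m * q (m - 1) + q (m - 2)) :
    ∀ n, ∀ N < q n, ∃ d : ℕ → ℕ,
      (∀ i, n ≤ i → d i = 0) ∧ d 0 < a 1 ∧ (∀ i, 1 ≤ i → d i ≤ a (i + 1)) ∧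
      (∀ i, 1 ≤ i → d i = a (i + 1) → d (i - 1) = 0) ∧
      ∑ i ∈ Finset.range n, d i * q i = N := by
  intro n
  induction n using Nat.strong_induction_on with
  | _ n ih =>
    match n with
    | 0 =>
      intro N hN
      refine ⟨fun _ => 0, fun _ _ => rfl, ?_, fun _ _ => Nat.zero_le _,
        fun i _ hi => rfl, ?_⟩
      · show (0 : ℕ) < a 1; have := ha 1 le_rfl; omega
      · show (0 : ℕ) = N; rw [hq0] at hN; omega
    | 1 =>
      intro N hN
      rw [hq1] at hN
      refine ⟨fun i => if i = 0 then N else 0, ?_, by simpa, ?_, ?_, ?_⟩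
      · intro i hi; simp [show i ≠ 0 by omega]
      · intro i hi; simp [show i ≠ 0 by omega]
      · intro i hi hia
        have := ha (i + 1) (by omega)
        simp [show i ≠ 0 by omega] at hia
        omega
      · simp [hq0]
    | (m+2) =>
      intro N hN
      rw [ost_rec hq m] at hN
      have hqpos := ost_qpos ha hq0 hq1 hq (m + 1)
      have hqmono := ost_qmono ha hq0 hq1 hq (m + 1)
      rw [ost_rec hq m] at hqmono
      set c := N / q (m + 1) with hc
      set r := N % q (m + 1) with hr
      have hNdm : c * q (m + 1) + r = N := by
        rw [Nat.mul_comm]; exact Nat.div_add_mod N (q (m + 1))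
      have hrlt : r < q (m + 1) := Nat.mod_lt _ hqpos
      have hca : c ≤ a (m + 2) := by
        by_contra hcon
        have : (a (m + 2) + 1) * q (m + 1) ≤ c * q (m + 1) :=
          Nat.mul_le_mul_right _ (by omega)
        have hqm : q m ≤ q (m + 1) := ost_qmono ha hq0 hq1 hq m
        nlinarith
      -- get a representation d' of r supported below m+1, with d' m = 0 in case c = a (m+2)
      have key : ∃ d' : ℕ → ℕ,
          (∀ i, m + 1 ≤ i → d' i = 0) ∧ d' 0 < a 1 ∧ (∀ i, 1 ≤ i → d' i ≤ a (i + 1)) ∧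
          (∀ i, 1 ≤ i → d' i = a (i + 1) → d' (i - 1) = 0) ∧
          (∑ i ∈ Finset.range (m + 1), d' i * q i = r) ∧
          (c = a (m + 2) → d' m = 0) := by
        rcases eq_or_lt_of_le hca with hceq | hclt
        · -- r < q m
          have hrm : r < q m := by rw [hceq] at hNdm; omega
          obtain ⟨d', hz, h0, h1, h2, hs⟩ := ih m (by omega) r hrm
          refine ⟨d', fun i hi => hz i (by omega), h0, h1, h2, ?_, fun _ => hz m le_rfl⟩
          rw [Finset.sum_range_succ, hz m le_rfl, hs]; ring
        · obtain ⟨d', hz, h0, h1, h2, hs⟩ := ih (m + 1) (by omega) r hrlt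
          exact ⟨d', hz, h0, h1, h2, hs, fun hceq => absurd hceq (by omega)⟩
      obtain ⟨d', hz', h0', h1', h2', hs', hcarry⟩ := key
      refine ⟨fun i => if i = m + 1 then c else d' i, ?_, ?_, ?_, ?_, ?_⟩
      · intro i hi
        simp only [show i ≠ m + 1 by omega, if_false]
        exact hz' i (by omega)
      · simpa using h0'
      · intro i hi
        by_cases hi1 : i = m + 1
        · subst hi1; simpa using hca
        · simpa [hi1] using h1' i hi
      · intro i hi hia
        by_cases hi1 : i = m + 1
        · subst hi1
          simp only [if_pos rfl] at hia
          simp only [show m + 1 - 1 = m from rfl, show m ≠ m + 1 by omega, if_false]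
          exact hcarry hia
        · simp only [if_neg hi1] at hia
          have hile : i ≤ m := by
            by_contra hcon
            have : d' i = 0 := hz' i (by omega)
            have := ha (i + 1) (by omega)
            omega
          have := h2' i hi hia
          simp only [show i - 1 ≠ m + 1 by omega, if_false]
          exact this
      · rw [Finset.sum_range_succ]
        have hsame : ∑ i ∈ Finset.range (m + 1),
            (if i = m + 1 then c else d' i) * q i
            = ∑ i ∈ Finset.range (m + 1), d' i * q i := by
          refine Finset.sum_congr rfl fun i hi => ?_
          rw [Finset.mem_range] at hi
          simp [show i ≠ m + 1 by omega]
        rw [hsame, hs']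
        show r + (if (m + 1 : ℕ) = m + 1 then c else d' (m + 1)) * q (m + 1) = N
        rw [if_pos rfl]
        omega

/-- Sums are independent of the cutoff beyond the support. -/
private lemma ost_sum_ext (d : ℕ → ℕ) {L M : ℕ} (hLM : L ≤ M)
    (h : ∀ i, L ≤ i → d i = 0) :
    ∑ i ∈ Finset.range M, d i * q i = ∑ i ∈ Finset.range L, d i * q i := by
  refine (Finset.sum_subset (Finset.range_subset_range.2 hLM) fun i _ hi => ?_).symm
  rw [Finset.mem_range, not_lt] at hi
  rw [h i hi, zero_mul]

/-- Digit-wise uniqueness. -/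
private lemma ost_unique (ha : ∀ i, 1 ≤ i → 1 ≤ a i) (hq0 : q 0 = 1) (hq1 : q 1 = a 1)
    (hq : ∀ m, 2 ≤ m → q m = a m * q (m - 1) + q (m - 2))
    (d e : ℕ → ℕ)
    (hd0 : d 0 < a 1) (hd1 : ∀ i, 1 ≤ i → d i ≤ a (i + 1))
    (hd2 : ∀ i, 1 ≤ i → d i = a (i + 1) → d (i - 1) = 0)
    (he0 : e 0 < a 1) (he1 : ∀ i, 1 ≤ i → e i ≤ a (i + 1))
    (he2 : ∀ i, 1 ≤ i → e i = a (i + 1) → e (i - 1) = 0) :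
    ∀ n, ∑ i ∈ Finset.range n, d i * q i = ∑ i ∈ Finset.range n, e i * q i →
      ∀ i < n, d i = e i := by
  intro n
  induction n with
  | zero => intro _ i hi; omega
  | succ n ihn =>
    intro hsum i hi
    have Sd := ost_bound ha hq0 hq1 hq d hd0 hd1 hd2 n
    have Se := ost_bound ha hq0 hq1 hq e he0 he1 he2 n
    have hqn := ost_qpos ha hq0 hq1 hq n
    rw [Finset.sum_range_succ, Finset.sum_range_succ] at hsum
    have hde : d n = e n := by
      rcases lt_trichotomy (d n) (e n) with h | h | h
      · have h2 : (d n + 1) * q n ≤ e n * q n := Nat.mul_le_mul_right _ (by omega)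
        have h3 : (d n + 1) * q n = d n * q n + q n := by ring
        omega
      · exact h
      · have h2 : (e n + 1) * q n ≤ d n * q n := Nat.mul_le_mul_right _ (by omega)
        have h3 : (e n + 1) * q n = e n * q n + q n := by ring
        omega
    have hsum' : ∑ i ∈ Finset.range n, d i * q i = ∑ i ∈ Finset.range n, e i * q i := by
      rw [hde] at hsum; omega
    rcases Nat.lt_succ_iff_lt_or_eq.mp hi with h | h
    · exact ihn hsum' i h
    · subst h; exact hde

end OstrowskiAux

/-- The Ostrowski numeration theorem: every positive integer `N` has a unique
representation `N = Σ dᵢ qᵢ` with `0 ≤ d₀ < a₁`, `0 ≤ dᵢ ≤ a_{i+1}` for `i ≥ 1`,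
and `d_{i-1} = 0` whenever `dᵢ = a_{i+1}`, where `qᵢ` are the denominators of the
convergents of the continued fraction `[a₀; a₁, a₂, …]`. -/
theorem ostrowski_numeration (a : ℕ → ℕ) (ha : ∀ i, 1 ≤ i → 1 ≤ a i)
    (q : ℕ → ℕ) (hq0 : q 0 = 1) (hq1 : q 1 = a 1)
    (hq : ∀ m, 2 ≤ m → q m = a m * q (m - 1) + q (m - 2))
    (N : ℕ) (hN : 0 < N) :
    ∃! d : ℕ → ℕ,
      (∃ L, ∀ i, L ≤ i → d i = 0) ∧
      d 0 < a 1 ∧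
      (∀ i, 1 ≤ i → d i ≤ a (i + 1)) ∧
      (∀ i, 1 ≤ i → d i = a (i + 1) → d (i - 1) = 0) ∧
      (∀ L, (∀ i, L ≤ i → d i = 0) → N = ∑ i ∈ Finset.range L, d i * q i) := by
  have hgrow := ost_qgrow ha hq0 hq1 hq
  have hNlt : N < q (N + 1) := lt_of_lt_of_le (Nat.lt_succ_self N) (hgrow (N + 1))
  obtain ⟨d, hz, h0, h1, h2, hs⟩ := ost_exists ha hq0 hq1 hq (N + 1) N hNlt
  have hdL : ∀ L, (∀ i, L ≤ i → d i = 0) → N = ∑ i ∈ Finset.range L, d i * q i := by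
    intro L hL
    have h1' : ∑ i ∈ Finset.range (max L (N + 1)), d i * q i
        = ∑ i ∈ Finset.range L, d i * q i := ost_sum_ext d (le_max_left _ _) hL
    have h2' : ∑ i ∈ Finset.range (max L (N + 1)), d i * q i
        = ∑ i ∈ Finset.range (N + 1), d i * q i := ost_sum_ext d (le_max_right _ _) hz
    omega
  refine ⟨d, ⟨⟨N + 1, hz⟩, h0, h1, h2, hdL⟩, ?_⟩
  rintro e ⟨⟨Le, hze⟩, he0, he1, he2, heL⟩
  set M := max Le (N + 1) with hM
  have hzeM : ∀ i, M ≤ i → e i = 0 := fun i hi => hze i (le_trans (le_max_left _ _) hi)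
  have hzdM : ∀ i, M ≤ i → d i = 0 := fun i hi => hz i (le_trans (le_max_right _ _) hi)
  have hsumE : ∑ i ∈ Finset.range M, e i * q i = N := (heL M hzeM).symm
  have hsumD : ∑ i ∈ Finset.range M, d i * q i = N := (hdL M hzdM).symm
  have huniq := ost_unique ha hq0 hq1 hq e d he0 he1 he2 h0 h1 h2 M
    (by rw [hsumE, hsumD])
  funext i
  by_cases hi : i < M
  · exact huniq i hi
  · rw [hzeM i (by omega), hzdM i (by omega)]
end

section
/- Let K = Q(√5), with the two real embeddings σ_1 (sending √5 to √5) and σ_2 (sending √5 to −√5). If t, t' ∈ K satisfy t·G + t'·(a γ^{m+1} + b γ^m) = 0 where G = a F_{m+1} + b F_m is a positive integer, a, b are non-negative integers not both zero, γ = (1+√5)/2, and this holds for two distinct values of m, then t = t' = 0. -/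
lemma sqrt5_irrational : Irrational (Real.sqrt 5) := by
  have h : Nat.Prime 5 := by norm_num
  simpa using h.irrational_sqrt

lemma rat_sqrt5_zero (q r : ℚ) (h : (q : ℝ) + r * Real.sqrt 5 = 0) : q = 0 ∧ r = 0 := by
  by_cases hr : r = 0
  · refine ⟨?_, hr⟩
    subst hr
    simpa using h
  · exfalso
    have hrne : (r : ℝ) ≠ 0 := by exact_mod_cast hr
    have : Real.sqrt 5 = ((-q / r : ℚ) : ℝ) := by
      push_cast
      field_simp
      linarith
    exact sqrt5_irrational ⟨-q / r, this.symm⟩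

lemma my_gold_sq (γ : ℝ) (hγ : γ = (1 + Real.sqrt 5) / 2) : γ ^ 2 = γ + 1 := by
  have h5 : Real.sqrt 5 ^ 2 = 5 := Real.sq_sqrt (by norm_num)
  subst hγ
  nlinarith [h5]

lemma gold_pow (γ : ℝ) (hγ : γ = (1 + Real.sqrt 5) / 2) :
    ∀ k : ℕ, γ ^ (k + 1) = (Nat.fib (k + 1) : ℝ) * γ + Nat.fib k := by
  have hsq := my_gold_sq γ hγ
  intro k
  induction k with
  | zero => simp
  | succ n ih =>
    have : γ ^ (n + 2) = γ ^ (n + 1) * γ := by ring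
    rw [this, ih, Nat.fib_add_two]
    push_cast
    nlinarith [hsq]

lemma key_step (γ : ℝ) (hγ : γ = (1 + Real.sqrt 5) / 2)
    (t₁ t₂ t₁' t₂' : ℚ) (a b : ℕ) (hab : ¬(a = 0 ∧ b = 0))
    (m m' : ℕ) (hm : 1 ≤ m) (hm' : 1 ≤ m') (hlt : m' < m)
    (h1 : ((t₁ : ℝ) + t₂ * Real.sqrt 5) * ((a : ℝ) * Nat.fib (m + 1) + b * Nat.fib m)
        + ((t₁' : ℝ) + t₂' * Real.sqrt 5) * ((a : ℝ) * γ ^ (m + 1) + b * γ ^ m) = 0)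
    (h2 : ((t₁ : ℝ) + t₂ * Real.sqrt 5) * ((a : ℝ) * Nat.fib (m' + 1) + b * Nat.fib m')
        + ((t₁' : ℝ) + t₂' * Real.sqrt 5) * ((a : ℝ) * γ ^ (m' + 1) + b * γ ^ m') = 0) :
    t₁' = 0 ∧ t₂' = 0 := by
  by_contra hcon
  -- T' ≠ 0 as a real number
  have hT' : (t₁' : ℝ) + t₂' * Real.sqrt 5 ≠ 0 := by
    intro h0
    exact hcon (rat_sqrt5_zero t₁' t₂' h0)
  set s := Real.sqrt 5 with hs
  have hs5 : s ^ 2 = 5 := Real.sq_sqrt (by norm_num)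
  have hsnn : 0 ≤ s := Real.sqrt_nonneg 5
  have hγpos : 0 < γ := by rw [hγ]; linarith
  -- G values are positive
  have hGpos : ∀ n : ℕ, 1 ≤ n → (0 : ℝ) < (a : ℝ) * Nat.fib (n + 1) + b * Nat.fib n := by
    intro n hn
    have hf1 : (1 : ℝ) ≤ Nat.fib n := by exact_mod_cast Nat.fib_pos.mpr hn
    have hf2 : (1 : ℝ) ≤ Nat.fib (n + 1) := by
      exact_mod_cast Nat.fib_pos.mpr (Nat.succ_pos n)
    rcases Nat.eq_zero_or_pos a with ha | ha
    · have hb : 0 < b := by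
        rcases Nat.eq_zero_or_pos b with hb | hb
        · exact absurd ⟨ha, hb⟩ hab
        · exact hb
      have : (1 : ℝ) ≤ b := by exact_mod_cast hb
      have : (0 : ℝ) ≤ (a : ℝ) * Nat.fib (n + 1) := by positivity
      nlinarith
    · have : (1 : ℝ) ≤ a := by exact_mod_cast ha
      have hbnn : (0 : ℝ) ≤ (b : ℝ) * Nat.fib n := by positivity
      nlinarith
  have hGm := hGpos m hm
  have hGm' := hGpos m' hm'
  -- c = aγ + b > 0
  have hc : (0 : ℝ) < (a : ℝ) * γ + b := by
    rcases Nat.eq_zero_or_pos a with ha | ha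
    · have hb : 0 < b := by
        rcases Nat.eq_zero_or_pos b with hb | hb
        · exact absurd ⟨ha, hb⟩ hab
        · exact hb
      have : (1 : ℝ) ≤ b := by exact_mod_cast hb
      have : (0 : ℝ) ≤ (a : ℝ) * γ := by positivity
      linarith
    · have : (1 : ℝ) ≤ a := by exact_mod_cast ha
      have : (0 : ℝ) ≤ (b : ℝ) := by positivity
      nlinarith
  set T : ℝ := (t₁ : ℝ) + t₂ * s with hT
  set T' : ℝ := (t₁' : ℝ) + t₂' * s with hTdef
  set Gm : ℝ := (a : ℝ) * Nat.fib (m + 1) + b * Nat.fib m with hGmdef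
  set Gm' : ℝ := (a : ℝ) * Nat.fib (m' + 1) + b * Nat.fib m' with hGm'def
  -- rewrite h1, h2
  have e1 : T * Gm = -(T' * (γ ^ m * ((a : ℝ) * γ + b))) := by
    have : (a : ℝ) * γ ^ (m + 1) + b * γ ^ m = γ ^ m * ((a : ℝ) * γ + b) := by ring
    rw [this] at h1; linarith
  have e2 : T * Gm' = -(T' * (γ ^ m' * ((a : ℝ) * γ + b))) := by
    have : (a : ℝ) * γ ^ (m' + 1) + b * γ ^ m' = γ ^ m' * ((a : ℝ) * γ + b) := by ring
    rw [this] at h2; linarith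
  -- cross multiply: γ^m * Gm' = γ^m' * Gm
  have ecross : T' * ((a : ℝ) * γ + b) * (γ ^ m * Gm') = T' * ((a : ℝ) * γ + b) * (γ ^ m' * Gm) := by
    linear_combination Gm' * e1 - Gm * e2
  have hmul : T' * ((a : ℝ) * γ + b) ≠ 0 := mul_ne_zero hT' (ne_of_gt hc)
  have ecross2 : γ ^ m * Gm' = γ ^ m' * Gm := by
    have := mul_left_cancel₀ hmul ecross
    exact this
  -- γ ^ (m - m') * Gm' = Gm
  set k := m - m' - 1 with hk
  have hmeq : m = m' + (k + 1) := by omega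
  have hpow : γ ^ m = γ ^ m' * γ ^ (k + 1) := by
    rw [hmeq, pow_add]
  rw [hpow] at ecross2
  have hγm' : γ ^ m' ≠ 0 := pow_ne_zero _ (ne_of_gt hγpos)
  have ekey : γ ^ (k + 1) * Gm' = Gm := by
    have : γ ^ m' * (γ ^ (k + 1) * Gm') = γ ^ m' * Gm := by
      rw [← ecross2]; ring
    exact mul_left_cancel₀ hγm' this
  -- expand γ^(k+1) = fib(k+1) γ + fib k, γ = (1+s)/2
  rw [gold_pow γ hγ k, hγ] at ekey
  -- so s * (fib(k+1) * Gm') = 2 Gm - (fib(k+1) + 2 fib k) * Gm'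
  have hfib : (1 : ℝ) ≤ Nat.fib (k + 1) := by
    exact_mod_cast Nat.fib_pos.mpr (Nat.succ_pos k)
  have hA : (Nat.fib (k + 1) : ℝ) * Gm' ≠ 0 := by positivity
  have hseq : s = (2 * Gm - ((Nat.fib (k + 1) : ℝ) + 2 * Nat.fib k) * Gm')
      / ((Nat.fib (k + 1) : ℝ) * Gm') := by
    rw [eq_div_iff hA]
    linear_combination 2 * ekey
  -- contradiction with irrationality
  apply sqrt5_irrational
  rw [← hs, hseq, hGmdef, hGm'def]
  refine ⟨(2 * ((a : ℚ) * Nat.fib (m + 1) + b * Nat.fib m)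
      - ((Nat.fib (k + 1) : ℚ) + 2 * Nat.fib k) * ((a : ℚ) * Nat.fib (m' + 1) + b * Nat.fib m'))
      / ((Nat.fib (k + 1) : ℚ) * ((a : ℚ) * Nat.fib (m' + 1) + b * Nat.fib m')), ?_⟩
  push_cast
  ring

/-- The linear-independence step from the proof of Theorem 1.1: if `t, t' ∈ ℚ(√5)`
(written via rational coordinates) satisfy
`t·(a F_{m+1} + b F_m) + t'·(a γ^{m+1} + b γ^m) = 0` for two distinct positive
values of `m`, then `t = t' = 0`. -/
theorem golden_linear_independence (γ : ℝ) (hγ : γ = (1 + Real.sqrt 5) / 2)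
    (t₁ t₂ t₁' t₂' : ℚ) (a b : ℕ) (hab : ¬(a = 0 ∧ b = 0))
    (m m' : ℕ) (hm : 1 ≤ m) (hm' : 1 ≤ m') (hne : m ≠ m')
    (h1 : ((t₁ : ℝ) + t₂ * Real.sqrt 5) * ((a : ℝ) * Nat.fib (m + 1) + b * Nat.fib m)
        + ((t₁' : ℝ) + t₂' * Real.sqrt 5) * ((a : ℝ) * γ ^ (m + 1) + b * γ ^ m) = 0)
    (h2 : ((t₁ : ℝ) + t₂ * Real.sqrt 5) * ((a : ℝ) * Nat.fib (m' + 1) + b * Nat.fib m')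
        + ((t₁' : ℝ) + t₂' * Real.sqrt 5) * ((a : ℝ) * γ ^ (m' + 1) + b * γ ^ m') = 0) :
    t₁ = 0 ∧ t₂ = 0 ∧ t₁' = 0 ∧ t₂' = 0 := by
  have hzero : t₁' = 0 ∧ t₂' = 0 := by
    rcases lt_or_gt_of_ne hne with h | h
    · exact key_step γ hγ t₁ t₂ t₁' t₂' a b hab m' m hm' hm h h2 h1
    · exact key_step γ hγ t₁ t₂ t₁' t₂' a b hab m m' hm hm' h h1 h2
  obtain ⟨h1', h2'⟩ := hzero
  subst h1'; subst h2'
  simp only [Rat.cast_zero, zero_mul, zero_add, add_zero, mul_zero] at h1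
  -- h1 : T * Gm = 0
  have hGpos : (0 : ℝ) < (a : ℝ) * Nat.fib (m + 1) + b * Nat.fib m := by
    have hf1 : (1 : ℝ) ≤ Nat.fib m := by exact_mod_cast Nat.fib_pos.mpr hm
    have hf2 : (1 : ℝ) ≤ Nat.fib (m + 1) := by
      exact_mod_cast Nat.fib_pos.mpr (Nat.succ_pos m)
    rcases Nat.eq_zero_or_pos a with ha | ha
    · have hb : 0 < b := by
        rcases Nat.eq_zero_or_pos b with hb | hb
        · exact absurd ⟨ha, hb⟩ hab
        · exact hb
      have : (1 : ℝ) ≤ b := by exact_mod_cast hb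
      have : (0 : ℝ) ≤ (a : ℝ) * Nat.fib (m + 1) := by positivity
      nlinarith
    · have : (1 : ℝ) ≤ a := by exact_mod_cast ha
      have hbnn : (0 : ℝ) ≤ (b : ℝ) * Nat.fib m := by positivity
      nlinarith
  have hT : (t₁ : ℝ) + t₂ * Real.sqrt 5 = 0 := by
    rcases mul_eq_zero.mp h1 with h | h
    · exact h
    · exact absurd h (ne_of_gt hGpos)
  obtain ⟨h3, h4⟩ := rat_sqrt5_zero t₁ t₂ hT
  exact ⟨h3, h4, rfl, rfl⟩
end
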